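/- Let ℜ = (S,(𝒦,𝒢),(X,ℬ),(ℱ,𝒯)) be a Riesz system, Z a uniform commutative monoid, and ℓ : ℱ → Z a Riesz integral over ℜ. If A,B∈ℬ are such that A+A⊆B, V₁,V₂∈unif Z, and γ_i ∈ S(V_i,B,ℓ) for i=1,2, then γ₁∪γ₂ ∈ S((V₁∘V₂)^cl, A, ℓ), where (V₁∘V₂)^cl denotes the closure of the relational composition V₁∘V₂ in the product topology of Z×Z. -/

import Mathlib

open Filter Set Topology
open scoped Pointwise

universe u v w

/-- A member of `unif M`: a closed, translation-invariant, symmetric entourage of the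
uniform commutative monoid `M`. -/
def IsUnifEnt (M : Type*) [AddCommMonoid M] [UniformSpace M] (W : Set (M × M)) : Prop :=
  W ∈ uniformity M ∧ IsClosed W ∧
    (∀ p ∈ W, ∀ t : M, (p.1 + t, p.2 + t) ∈ W) ∧ ∀ p ∈ W, (p.2, p.1) ∈ W

/-- `f` is supported by `α` (written `f ≺ α`): `f` vanishes off some `κ ∈ 𝒦` with `κ ⊆ α`. -/
def SupportedBy {S : Type u} {X : Type v} [Zero X]
    (𝒦 : Set (Set S)) (f : S → X) (α : Set S) : Prop :=
  ∃ κ ∈ 𝒦, κ ⊆ α ∧ ∀ s ∉ κ, f s = 0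

/-- `f` equals `x` over `α`: `f` is identically `x` on some `γ ∈ 𝒢` containing `α`. -/
def EqualsOver {S : Type u} {X : Type v}
    (𝒢 : Set (Set S)) (f : S → X) (x : X) (α : Set S) : Prop :=
  ∃ γ ∈ 𝒢, α ⊆ γ ∧ ∀ s ∈ γ, f s = x

/-- `ℱ_B`: members of `ℱ` with range contained in `B`. -/
def FB {S : Type u} {X : Type v} (ℱ : Set (S → X)) (B : Set X) : Set (S → X) :=
  {f | f ∈ ℱ ∧ Set.range f ⊆ B}

/-- the `ℬ`-hull of `x`: intersection of all members of `ℬ` containing `x`. -/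
def BHull {X : Type v} (ℬ : Set (Set X)) (x : X) : Set X :=
  ⋂₀ {B | B ∈ ℬ ∧ x ∈ B}

/-- the `ℬ`-hull of a subset `A` of `X`. -/
def BHullS {X : Type v} (ℬ : Set (Set X)) (A : Set X) : Set X :=
  ⋂₀ {B | B ∈ ℬ ∧ A ⊆ B}

/-- A field of subsets of `S`. -/
def IsSetField {S : Type u} (ℰ : Set (Set S)) : Prop :=
  Set.univ ∈ ℰ ∧ (∀ A ∈ ℰ, Aᶜ ∈ ℰ) ∧ ∀ A ∈ ℰ, ∀ B ∈ ℰ, A ∪ B ∈ ℰ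

/-- `ℰ`: the smallest field of subsets of `S` containing `𝒦 ∪ 𝒢`. -/
def genField {S : Type u} (𝒦 𝒢 : Set (Set S)) : Set (Set S) :=
  ⋂₀ {ℰ | 𝒦 ∪ 𝒢 ⊆ ℰ ∧ IsSetField ℰ}

/-- A Riesz system `(S,(𝒦,𝒢),(X,ℬ),(ℱ,𝒯))` (Assumptions 2.3 of the paper). -/
structure RieszSystem {S : Type u} {X : Type v} [AddCommMonoid X] [UniformSpace X]
    (𝒦 𝒢 : Set (Set S)) (ℬ : Set (Set X)) (ℱ : Set (S → X))
    (𝒯 : Filter ((S → X) × (S → X))) : Prop where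
  K_empty : ∅ ∈ 𝒦
  K_union : ∀ κ₁ ∈ 𝒦, ∀ κ₂ ∈ 𝒦, κ₁ ∪ κ₂ ∈ 𝒦
  G_empty : ∅ ∈ 𝒢
  G_union : ∀ γ₁ ∈ 𝒢, ∀ γ₂ ∈ 𝒢, γ₁ ∪ γ₂ ∈ 𝒢
  G_inter : ∀ γ₁ ∈ 𝒢, ∀ γ₂ ∈ 𝒢, γ₁ ∩ γ₂ ∈ 𝒢
  KG_diff : ∀ κ ∈ 𝒦, ∀ γ ∈ 𝒢, κ \ γ ∈ 𝒦 ∧ γ \ κ ∈ 𝒢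
  KG_interpose : ∀ κ ∈ 𝒦, ∀ γ ∈ 𝒢, κ ⊆ γ →
      ∃ γ' ∈ 𝒢, ∃ κ' ∈ 𝒦, κ ⊆ γ' ∧ γ' ⊆ κ' ∧ κ' ⊆ γ
  X_add : UniformContinuous fun p : X × X => p.1 + p.2
  B_nonempty : ℬ.Nonempty
  B_inter : ∀ 𝒞 ⊆ ℬ, 𝒞.Nonempty → ⋂₀ 𝒞 ∈ ℬ
  B_zero : ∀ B ∈ ℬ, (0 : X) ∈ B
  B_add : ∀ B ∈ ℬ, ∀ B' ∈ ℬ, ∃ C ∈ ℬ, B + B' ⊆ C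
  B_cover : ∀ x : X, ∃ B ∈ ℬ, x ∈ B
  F_zero : (0 : S → X) ∈ ℱ
  F_add : ∀ f ∈ ℱ, ∀ g ∈ ℱ, f + g ∈ ℱ
  T_refl : ∀ T ∈ 𝒯, ∀ f ∈ ℱ, (f, f) ∈ T
  T_symm : ∀ T ∈ 𝒯, ∃ V ∈ 𝒯, ∀ f g : S → X, (f, g) ∈ V → (g, f) ∈ T
  T_comp : ∀ T ∈ 𝒯, ∃ V ∈ 𝒯, ∀ f g h : S → X, (f, g) ∈ V → (g, h) ∈ V → (f, h) ∈ T
  T_add : ∀ T ∈ 𝒯, ∃ V ∈ 𝒯, ∀ f f' g g' : S → X,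
      (f, f') ∈ V → (g, g') ∈ V → (f + g, f' + g') ∈ T
  F_range : ∀ f ∈ ℱ, ∃ B ∈ ℬ, Set.range f ⊆ B
  F_partble : ∀ f ∈ ℱ, ∀ W ∈ uniformity X, ∃ G : Finset (Set S), ↑G ⊆ 𝒢 ∧
      (⋃ γ ∈ G, γ) = Set.univ ∧ ∀ γ ∈ G, ∀ s ∈ γ, ∀ t ∈ γ, (f s, f t) ∈ W
  F_urysohn : ∀ κ ∈ 𝒦, ∀ γ ∈ 𝒢, κ ⊆ γ → ∀ x : X, ∃ f ∈ ℱ,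
      Set.range f ⊆ BHull ℬ x ∧ SupportedBy 𝒦 f γ ∧ EqualsOver 𝒢 f x κ
  F_ext : ∀ B ∈ ℬ, ∀ T ∈ 𝒯, ∃ U ∈ uniformity X, ∀ κ ∈ 𝒦, ∀ γ ∈ 𝒢, κ ⊆ γ →
      ∀ f ∈ FB ℱ B, ∀ g ∈ FB ℱ B, SupportedBy 𝒦 f γ → SupportedBy 𝒦 g γ →
      (∃ ω ∈ 𝒢, κ ⊆ ω ∧ ω ⊆ γ ∧ ∀ s ∈ ω, (f s, g s) ∈ U) →
      ∃ p ∈ FB ℱ B, ∃ q ∈ FB ℱ B, SupportedBy 𝒦 p (γ \ κ) ∧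
        SupportedBy 𝒦 q (γ \ κ) ∧ (f + p, g + q) ∈ T
  F_partunity : ∀ B ∈ ℬ, ∀ G : Finset (Set S), ↑G ⊆ 𝒢 → ∀ κ ∈ 𝒦, κ ⊆ (⋃ γ ∈ G, γ) →
      ∀ f ∈ FB ℱ B, ∃ g : Set S → (S → X),
        (∀ γ ∈ G, g γ ∈ FB ℱ B ∧ SupportedBy 𝒦 (g γ) γ) ∧
        (∀ J : Finset (Set S), J ⊆ G → (∑ γ ∈ J, g γ) ∈ FB ℱ B) ∧
        ∀ s ∈ κ, f s = ∑ γ ∈ G, g γ s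

/-- `f` and `g` are `ℰ`-separated. -/
def ESeparated {S : Type u} {X : Type v} [Zero X]
    (𝒦 𝒢 : Set (Set S)) (f g : S → X) : Prop :=
  ∃ E₁ ∈ genField 𝒦 𝒢, ∃ E₂ ∈ genField 𝒦 𝒢, Disjoint E₁ E₂ ∧
    SupportedBy 𝒦 f E₁ ∧ SupportedBy 𝒦 g E₂

/-- `ℓ` is `ℰ`-additive. -/
def EAdditive {S : Type u} {X : Type v} {Z : Type w} [AddCommMonoid X] [AddCommMonoid Z]
    (𝒦 𝒢 : Set (Set S)) (ℱ : Set (S → X)) (ℓ : (S → X) → Z) : Prop :=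
  ∀ f ∈ ℱ, ∀ g ∈ ℱ, ESeparated 𝒦 𝒢 f g → ℓ (f + g) = ℓ f + ℓ g

/-- `ℓ` is `s`-bounded over `ℬ`. -/
def SBounded {S : Type u} {X : Type v} {Z : Type w} [AddCommMonoid X]
    [AddCommMonoid Z] [UniformSpace Z]
    (𝒦 𝒢 : Set (Set S)) (ℬ : Set (Set X)) (ℱ : Set (S → X)) (ℓ : (S → X) → Z) : Prop :=
  ∀ B ∈ ℬ, ∀ W : Set (Z × Z), IsUnifEnt Z W → ∀ G : ℕ → Set S, (∀ n, G n ∈ 𝒢) →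
    (∀ m n : ℕ, m ≠ n → Disjoint (G m) (G n)) → ∃ m : ℕ, ∀ n > m,
      ∀ f ∈ FB ℱ B, ∀ g ∈ FB ℱ B, SupportedBy 𝒦 g (G n) → (ℓ f, ℓ (f + g)) ∈ W

/-- `ℓ` is uniformly continuous on `A` with respect to the uniformity `𝒯`. -/
def UContOn {S : Type u} {X : Type v} {Z : Type w} [UniformSpace Z]
    (𝒯 : Filter ((S → X) × (S → X))) (A : Set (S → X)) (ℓ : (S → X) → Z) : Prop :=
  ∀ W ∈ uniformity Z, ∃ T ∈ 𝒯, ∀ f ∈ A, ∀ g ∈ A, (f, g) ∈ T → (ℓ f, ℓ g) ∈ W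

/-- A relatively complete subset of a uniform space. -/
def RelComplete {Z : Type w} [UniformSpace Z] (A : Set Z) : Prop :=
  IsComplete (closure A)

/-- `ℓ` is a Riesz integral over the Riesz system `(S,(𝒦,𝒢),(X,ℬ),(ℱ,𝒯))`. -/
def RieszIntegral {S : Type u} {X : Type v} {Z : Type w} [AddCommMonoid X]
    [AddCommMonoid Z] [UniformSpace Z]
    (𝒦 𝒢 : Set (Set S)) (ℬ : Set (Set X)) (ℱ : Set (S → X))
    (𝒯 : Filter ((S → X) × (S → X))) (ℓ : (S → X) → Z) : Prop :=
  EAdditive 𝒦 𝒢 ℱ ℓ ∧ SBounded 𝒦 𝒢 ℬ ℱ ℓ ∧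
    ∀ B ∈ ℬ, UContOn 𝒯 (FB ℱ B) ℓ ∧ RelComplete (ℓ '' FB ℱ B)

/-- The members of a finite family of sets are pairwise disjoint. -/
def PairwiseDisjFinset {S : Type u} (K : Finset (Set S)) : Prop :=
  ∀ κ₁ ∈ K, ∀ κ₂ ∈ K, κ₁ ≠ κ₂ → Disjoint κ₁ κ₂

/-- `α` is `W`-small with respect to `(h, B)`. -/
def WSmall {S : Type u} {X : Type v} {Z : Type w} [AddCommMonoid X] [AddCommMonoid Z]
    (𝒦 𝒢 : Set (Set S)) (h : Set S → X → Z) (B : Set X)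
    (W : Set (Z × Z)) (α : Set S) : Prop :=
  ∃ γ ∈ 𝒢, α ⊆ γ ∧ ∀ K : Finset (Set S), ↑K ⊆ 𝒦 → PairwiseDisjFinset K →
    (∀ κ ∈ K, κ ⊆ γ) → ∀ x y : Set S → X, (∀ κ ∈ K, x κ ∈ B) → (∀ κ ∈ K, y κ ∈ B) →
      (∑ κ ∈ K, h κ (x κ), ∑ κ ∈ K, h κ (x κ + y κ)) ∈ W

/-- `α` is regular with respect to `(h, 𝒦, 𝒢, ℬ)`. -/
def RegularSet {S : Type u} {X : Type v} {Z : Type w} [AddCommMonoid X]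
    [AddCommMonoid Z] [UniformSpace Z]
    (𝒦 𝒢 : Set (Set S)) (ℬ : Set (Set X)) (h : Set S → X → Z) (α : Set S) : Prop :=
  ∀ B ∈ ℬ, ∀ V : Set (Z × Z), IsUnifEnt Z V →
    ∃ κ ∈ 𝒦, ∃ γ ∈ 𝒢, κ ⊆ α ∧ α ⊆ γ ∧ WSmall 𝒦 𝒢 h B V (γ \ κ)

/-- `R_h`: the family of regular sets of `h`. -/
def RSet {S : Type u} {X : Type v} {Z : Type w} [AddCommMonoid X]
    [AddCommMonoid Z] [UniformSpace Z]
    (𝒦 𝒢 : Set (Set S)) (ℬ : Set (Set X)) (h : Set S → X → Z) : Set (Set S) :=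
  {α | RegularSet 𝒦 𝒢 ℬ h α}

/-- `h` is uniformly partition continuous with respect to `(𝒦,𝒢,ℬ)`. -/
def UPartCont {S : Type u} {X : Type v} {Z : Type w} [AddCommMonoid X] [UniformSpace X]
    [AddCommMonoid Z] [UniformSpace Z]
    (𝒦 𝒢 : Set (Set S)) (ℬ : Set (Set X)) (h : Set S → X → Z) : Prop :=
  ∀ W : Set (Z × Z), IsUnifEnt Z W → ∀ B ∈ ℬ, ∃ U ∈ uniformity X,
    ∀ R : Finset (Set S), ↑R ⊆ RSet 𝒦 𝒢 ℬ h → PairwiseDisjFinset R →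
    ∀ x y : Set S → X, (∀ ρ ∈ R, x ρ ∈ B ∧ y ρ ∈ B ∧ (x ρ, y ρ) ∈ U) →
      (∑ ρ ∈ R, h ρ (x ρ), ∑ ρ ∈ R, h ρ (y ρ)) ∈ W

/-- `h` is `s`-bounded with respect to `(𝒦,𝒢,ℬ)`. -/
def MSBounded {S : Type u} {X : Type v} {Z : Type w} [AddCommMonoid X]
    [AddCommMonoid Z] [UniformSpace Z]
    (𝒦 𝒢 : Set (Set S)) (ℬ : Set (Set X)) (h : Set S → X → Z) : Prop :=
  ∀ B ∈ ℬ, ∀ α : ℕ → Set S, (∀ n, α n ∈ RSet 𝒦 𝒢 ℬ h) →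
    (∀ m n : ℕ, m ≠ n → Disjoint (α m) (α n)) → ∀ V : Set (Z × Z), IsUnifEnt Z V →
      ∃ m : ℕ, ∀ n > m, WSmall 𝒦 𝒢 h B V (α n)

/-- `𝒱(h,𝒦,𝒢,B)`: all finite sums `∑_{ρ∈R} x_ρ.h(ρ)`. -/
def VSums {S : Type u} {X : Type v} {Z : Type w} [AddCommMonoid X]
    [AddCommMonoid Z] [UniformSpace Z]
    (𝒦 𝒢 : Set (Set S)) (ℬ : Set (Set X)) (h : Set S → X → Z) (B : Set X) : Set Z :=
  {z | ∃ R : Finset (Set S), ↑R ⊆ RSet 𝒦 𝒢 ℬ h ∧ PairwiseDisjFinset R ∧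
    ∃ x : Set S → X, (∀ ρ ∈ R, x ρ ∈ B) ∧ z = ∑ ρ ∈ R, h ρ (x ρ)}

/-- `z` is the limit of the net `(F κ x : κ ∈ 𝒦, κ ⊆ γ)` directed by inclusion. -/
def KBelowLim {S : Type u} {X : Type v} {Z : Type w} [TopologicalSpace Z]
    (𝒦 : Set (Set S)) (γ : Set S) (F : Set S → X → Z) (x : X) (z : Z) : Prop :=
  Tendsto (fun κ : {κ : Set S // κ ∈ 𝒦 ∧ κ ⊆ γ} => F κ.1 x) atTop (nhds z)

/-- `z` is the limit of the net `(F γ' x : γ' ∈ 𝒢, α ⊆ γ')` directed by reverse inclusion. -/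
def GAboveLim {S : Type u} {X : Type v} {Z : Type w} [TopologicalSpace Z]
    (𝒢 : Set (Set S)) (α : Set S) (F : Set S → X → Z) (x : X) (z : Z) : Prop :=
  Tendsto (fun γ : {γ : Set S // γ ∈ 𝒢 ∧ α ⊆ γ} => F γ.1 x) atBot (nhds z)

/-- `h` is a Riesz measure over `(𝒦,𝒢,ℬ)`. -/
def RieszMeasure {S : Type u} {X : Type v} {Z : Type w} [AddCommMonoid X] [UniformSpace X]
    [AddCommMonoid Z] [UniformSpace Z]
    (𝒦 𝒢 : Set (Set S)) (ℬ : Set (Set X)) (h : Set S → X → Z) : Prop :=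
  𝒢 ⊆ RSet 𝒦 𝒢 ℬ h ∧
  IsSetField (RSet 𝒦 𝒢 ℬ h) ∧
  (∀ ρ₁ ∈ RSet 𝒦 𝒢 ℬ h, ∀ ρ₂ ∈ RSet 𝒦 𝒢 ℬ h, Disjoint ρ₁ ρ₂ →
      ∀ x : X, h (ρ₁ ∪ ρ₂) x = h ρ₁ x + h ρ₂ x) ∧
  (∀ γ ∈ 𝒢, ∀ x : X, KBelowLim 𝒦 γ h x (h γ x)) ∧
  (∀ α : Set S, ∀ x : X, GAboveLim 𝒢 α h x (h α x)) ∧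
  UPartCont 𝒦 𝒢 ℬ h ∧ MSBounded 𝒦 𝒢 ℬ h ∧
  ∀ B ∈ ℬ, RelComplete (VSums 𝒦 𝒢 ℬ h B)

/-- The finite disjoint family `R` refines `Q`. -/
def RefinesF {S : Type u} (R Q : Finset (Set S)) : Prop :=
  ∀ ρ ∈ R, ∃ q ∈ Q, ρ ⊆ q

/-- `R` is a finite disjoint partition of `E` by sets regular for `h`. -/
def IsPartitionOf {S : Type u} {X : Type v} {Z : Type w} [AddCommMonoid X]
    [AddCommMonoid Z] [UniformSpace Z]
    (𝒦 𝒢 : Set (Set S)) (ℬ : Set (Set X)) (h : Set S → X → Z)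
    (R : Finset (Set S)) (E : Set S) : Prop :=
  ↑R ⊆ RSet 𝒦 𝒢 ℬ h ∧ PairwiseDisjFinset R ∧ (⋃ ρ ∈ R, ρ) = E

/-- `z = ∫_E f.dμ`. -/
def IsIntegralOf {S : Type u} {X : Type v} {Z : Type w} [AddCommMonoid X]
    [AddCommMonoid Z] [UniformSpace Z]
    (𝒦 𝒢 : Set (Set S)) (ℬ : Set (Set X)) (μ : Set S → X → Z)
    (E : Set S) (f : S → X) (z : Z) : Prop :=
  ∀ V ∈ nhds z, ∃ Q : Finset (Set S), IsPartitionOf 𝒦 𝒢 ℬ μ Q E ∧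
    ∀ R : Finset (Set S), IsPartitionOf 𝒦 𝒢 ℬ μ R E → RefinesF R Q →
      ∀ s : Set S → S, (∀ ρ ∈ R, s ρ ∈ ρ) → (∑ ρ ∈ R, μ ρ (f (s ρ))) ∈ V

/-- `ℱ*(x,κ,γ,B)`. -/
def FStar {S : Type u} {X : Type v} [Zero X]
    (𝒦 𝒢 : Set (Set S)) (ℱ : Set (S → X)) (x : X) (κ γ : Set S) (B : Set X) :
    Set (S → X) :=
  {f | f ∈ FB ℱ B ∧ EqualsOver 𝒢 f x κ ∧ SupportedBy 𝒦 f γ}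

/-- `τ` is the set function `τ_ℓ` generated by `ℓ` on `𝒦`. -/
def IsTau {S : Type u} {X : Type v} {Z : Type w} [AddCommMonoid X] [UniformSpace Z]
    (𝒦 𝒢 : Set (Set S)) (ℬ : Set (Set X)) (ℱ : Set (S → X))
    (ℓ : (S → X) → Z) (τ : Set S → X → Z) : Prop :=
  ∀ κ ∈ 𝒦, ∀ x : X, ∀ V ∈ nhds (τ κ x), ∃ β ∈ 𝒢, κ ⊆ β ∧
    ℓ '' FStar 𝒦 𝒢 ℱ x κ β (BHull ℬ x) ⊆ V

/-- `ξ = ξ_ℓ` is the pointwise limit of `τ = τ_ℓ` over `𝒦⁻(γ)`. -/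
def IsXi {S : Type u} {X : Type v} {Z : Type w} [TopologicalSpace Z]
    (𝒦 𝒢 : Set (Set S)) (τ ξ : Set S → X → Z) : Prop :=
  ∀ γ ∈ 𝒢, ∀ x : X, KBelowLim 𝒦 γ τ x (ξ γ x)

/-- `ν = ν_ℓ` is the pointwise limit of `ξ = ξ_ℓ` over `𝒢⁺(α)`. -/
def IsNu {S : Type u} {X : Type v} {Z : Type w} [TopologicalSpace Z]
    (𝒢 : Set (Set S)) (ξ ν : Set S → X → Z) : Prop :=
  ∀ α : Set S, ∀ x : X, GAboveLim 𝒢 α ξ x (ν α x)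

/-- `S(W,B,ℓ)`. -/
def SWB {S : Type u} {X : Type v} {Z : Type w} [AddCommMonoid X]
    (𝒦 𝒢 : Set (Set S)) (ℱ : Set (S → X)) (ℓ : (S → X) → Z)
    (W : Set (Z × Z)) (B : Set X) : Set (Set S) :=
  {γ | γ ∈ 𝒢 ∧ ∀ f ∈ FB ℱ B, ∀ g ∈ FB ℱ B, SupportedBy 𝒦 g γ → (ℓ f, ℓ (f + g)) ∈ W}

/-- `ℓ` has the Hammerstein property relative to `ℰ`. -/
def Hammerstein {S : Type u} {X : Type v} {Z : Type w} [AddCommMonoid X] [AddCommMonoid Z]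
    (𝒦 𝒢 : Set (Set S)) (ℱ : Set (S → X)) (ℓ : (S → X) → Z) : Prop :=
  ∀ f ∈ ℱ, ∀ g₁ ∈ ℱ, ∀ g₂ ∈ ℱ, ESeparated 𝒦 𝒢 g₁ g₂ →
    ℓ (f + g₁ + g₂) + ℓ f = ℓ (f + g₁) + ℓ (f + g₂)

/-- `ℓ` is quasi-additive. -/
def QuasiAdditive {S : Type u} {X : Type v} {Z : Type w} [AddCommMonoid X]
    [AddCommMonoid Z] [UniformSpace Z]
    (ℬ : Set (Set X)) (ℱ : Set (S → X)) (ℓ : (S → X) → Z) : Prop :=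
  ∀ W : Set (Z × Z), IsUnifEnt Z W → ∀ B ∈ ℬ, ∃ V : Set (Z × Z), IsUnifEnt Z V ∧
    ∀ f ∈ FB ℱ B, ∀ g ∈ FB ℱ B, ((0 : Z), ℓ g) ∈ V → (ℓ f, ℓ (f + g)) ∈ W

/-- A perfect subset of `Z`: any function whose finite partial sums all lie in the set
is summable. -/
def PerfectSet {Z : Type w} [AddCommMonoid Z] [TopologicalSpace Z] (A : Set Z) : Prop :=
  ∀ ⦃ι : Type w⦄ (g : ι → Z), (∀ J : Finset ι, ∑ i ∈ J, g i ∈ A) → Summable g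

/-- A quasi-perfect subset of `Z`: any function whose finite partial sums all lie in the
set has a Cauchy net of finite partial sums. -/
def QuasiPerfectSet {Z : Type w} [AddCommMonoid Z] [UniformSpace Z] (A : Set Z) : Prop :=
  ∀ ⦃ι : Type w⦄ (g : ι → Z), (∀ J : Finset ι, ∑ i ∈ J, g i ∈ A) →
    Cauchy (Filter.map (fun J : Finset ι => ∑ i ∈ J, g i) Filter.atTop)

/-- `α` is `U`-small with respect to `(ℓ, B)`. -/
def USmallOp {S : Type u}{X : Type v} {Z : Type w} [AddCommMonoid X] [Zero X]
    (𝒦 : Set (Set S)) (ℱ : Set (S → X)) (ℓ : (S → X) → Z) (B : Set X)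
    (U : Set (Z × Z)) (α : Set S) : Prop :=
  ∀ f ∈ FB ℱ B, ∀ g ∈ FB ℱ B, SupportedBy 𝒦 g α → (ℓ f, ℓ (f + g)) ∈ U

/-- `ℓ` is `𝒢`-bounded. -/
def GBounded {S : Type u} {X : Type v} {Z : Type w} [AddCommMonoid X]
    [AddCommMonoid Z] [UniformSpace Z]
    (𝒦 𝒢 : Set (Set S)) (ℬ : Set (Set X)) (ℱ : Set (S → X)) (ℓ : (S → X) → Z) : Prop :=
  ∀ U : Set (Z × Z), IsUnifEnt Z U → ∀ B ∈ ℬ, ∀ K ∈ 𝒦, ∀ 𝒢' ⊆ 𝒢, K ⊆ ⋃₀ 𝒢' →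
    ∃ H : Finset (Set S), ↑H ⊆ 𝒢' ∧ USmallOp 𝒦 ℱ ℓ B U (K \ ⋃ γ ∈ H, γ)

/-- `ℬ₀` (Notation 2.2). -/
def B0 {X : Type v} [AddCommMonoid X] (ℬ : Set (Set X)) : Set (Set X) :=
  ⋂₀ {ℋ | ℋ ⊆ ℬ ∧ (∀ 𝒞 ⊆ ℋ, 𝒞.Nonempty → ⋂₀ 𝒞 ∈ ℋ) ∧ ⋂₀ ℋ = {0} ∧
      (∀ x : X, BHull ℬ x ∈ ℋ) ∧ ∀ H₁ ∈ ℋ, ∀ H₂ ∈ ℋ, BHullS ℬ (H₁ + H₂) ∈ ℋ}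

/-- `ℱ₀` (Notation 2.2). -/
def F0 {S : Type u} {X : Type v} [AddCommMonoid X]
    (ℬ : Set (Set X)) (ℱ : Set (S → X)) : Set (S → X) :=
  {f | f ∈ ℱ ∧ ∃ B ∈ B0 ℬ, Set.range f ⊆ B}

/-- The uniformity of uniform convergence on `S`, as a filter on `(S → X) × (S → X)`. -/
def UnifConvFilter (S : Type u) (X : Type v) [UniformSpace X] :
    Filter ((S → X) × (S → X)) :=
  ⨅ V ∈ uniformity X, Filter.principal {p : (S → X) × (S → X) | ∀ s : S, (p.1 s, p.2 s) ∈ V}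

/-- The additional conditions of Remark 2.5.1 on a Riesz system. -/
structure Remark251 {S : Type u} {X : Type v} [TopologicalSpace S]
    [AddCommGroup X] [Module ℝ X] [UniformSpace X]
    (𝒦 𝒢 : Set (Set S)) (ℬ : Set (Set X)) (ℱ : Set (S → X))
    (𝒯 : Filter ((S → X) × (S → X))) : Prop where
  K_closed : ∀ κ ∈ 𝒦, IsClosed κ
  G_open : ∀ γ ∈ 𝒢, IsOpen γ
  B_def : ℬ = {B : Set X | IsClosed B ∧ TotallyBounded B}
  F_sub : ∀ f ∈ ℱ, Continuous f ∧ TotallyBounded (Set.range f)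
  F_module : ∀ φ : S → ℝ, Continuous φ → TotallyBounded (Set.range φ) →
      ∀ f ∈ ℱ, (fun s => φ s • f s) ∈ ℱ
  F_tensor : ∀ x : X, ∀ φ : S → ℝ, Continuous φ → TotallyBounded (Set.range φ) →
      (∃ κ ∈ 𝒦, ∀ s ∉ κ, φ s = 0) → (fun s => φ s • x) ∈ ℱ
  T_coarser : UnifConvFilter S X ≤ 𝒯

/-- `A` is a bounded subset of the "topological vector space" `(ℱ,𝒯)`:
it is absorbed by every `𝒯`-neighbourhood of `0`. -/
def FBddIn {S : Type u} {X : Type v} [AddCommGroup X] [Module ℝ X]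
    (𝒯 : Filter ((S → X) × (S → X))) (A : Set (S → X)) : Prop :=
  ∀ T ∈ 𝒯, ∃ r : ℝ, 0 < r ∧ ∀ f ∈ A, ∀ c : ℝ, |c| ≤ r → ((0 : S → X), c • f) ∈ T

/-! Write `g ≺ κ ⊆ γ₁ ∪ γ₂`. Interposing `𝒢`- and `𝒦`-sets alternately between `κ` and
`γ₁ ∪ γ₂` gives a decreasing chain whose collars `ω (2j) \ k (2j+1)` are disjoint members of `𝒢`,
so by s-boundedness one collar `a \ k` lies in `S(W, C, ℓ)`. On the `𝒦`-set just inside `a`, a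
partition of unity subordinate to `a ∩ γ₁, a ∩ γ₂` splits `g` as `g₁ + g₂`. The extension axiom
corrects `g` and `g₁ + g₂` by functions supported in the collar into `𝒯`-close functions, so
`ℓ (f + g)` is `W ∘ W ∘ W`-close to `ℓ (f + g₁ + g₂)`, which is `V₁ ∘ V₂`-related to `ℓ f`.
As `W` is arbitrary, `(ℓ f, ℓ (f + g))` lies in the closure of `V₁ ∘ V₂`. -/

open SetRel Uniformity Function

section SupportedBy

variable {S : Type u} {X : Type v} {𝒦 : Set (Set S)}

lemma SupportedBy.mono [Zero X] {f : S → X} {α β : Set S} (h : SupportedBy 𝒦 f α)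
    (hαβ : α ⊆ β) : SupportedBy 𝒦 f β :=
  let ⟨κ, hκ, hκα, hf⟩ := h
  ⟨κ, hκ, hκα.trans hαβ, hf⟩

lemma supportedBy_zero [Zero X] (hK : ∅ ∈ 𝒦) (α : Set S) : SupportedBy 𝒦 (0 : S → X) α :=
  ⟨∅, hK, empty_subset α, fun _ _ => rfl⟩

lemma SupportedBy.add [AddCommMonoid X] (hK : ∀ κ₁ ∈ 𝒦, ∀ κ₂ ∈ 𝒦, κ₁ ∪ κ₂ ∈ 𝒦)
    {f g : S → X} {α : Set S} (hf : SupportedBy 𝒦 f α) (hg : SupportedBy 𝒦 g α) :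
    SupportedBy 𝒦 (f + g) α := by
  obtain ⟨κ₁, hκ₁, hκ₁α, hf₀⟩ := hf
  obtain ⟨κ₂, hκ₂, hκ₂α, hg₀⟩ := hg
  refine ⟨κ₁ ∪ κ₂, hK κ₁ hκ₁ κ₂ hκ₂, union_subset hκ₁α hκ₂α, fun s hs => ?_⟩
  rw [mem_union, not_or] at hs
  simp only [Pi.add_apply, hf₀ s hs.1, hg₀ s hs.2, add_zero]

end SupportedBy

section FB

variable {S : Type u} {X : Type v} {ℱ : Set (S → X)}

lemma FB_mono {B C : Set X} (h : B ⊆ C) : FB ℱ B ⊆ FB ℱ C :=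
  fun _ hf => ⟨hf.1, hf.2.trans h⟩

lemma zero_mem_FB [Zero X] (hℱ : (0 : S → X) ∈ ℱ) {B : Set X} (hB : (0 : X) ∈ B) :
    (0 : S → X) ∈ FB ℱ B :=
  ⟨hℱ, range_subset_iff.2 fun _ => hB⟩

lemma add_mem_FB [AddCommMonoid X] (hadd : ∀ f ∈ ℱ, ∀ g ∈ ℱ, f + g ∈ ℱ)
    {B B' C : Set X} {f g : S → X} (hf : f ∈ FB ℱ B) (hg : g ∈ FB ℱ B') (h : B + B' ⊆ C) :
    f + g ∈ FB ℱ C :=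
  ⟨hadd f hf.1 g hg.1, range_subset_iff.2 fun s =>
    h (add_mem_add (hf.2 (mem_range_self s)) (hg.2 (mem_range_self s)))⟩

end FB

section UniformMonoid

variable {Z : Type w} [AddCommMonoid Z] [UniformSpace Z]

lemma exists_isUnifEnt_subset (hZadd : UniformContinuous fun p : Z × Z => p.1 + p.2)
    {d : Set (Z × Z)} (hd : d ∈ 𝓤 Z) : ∃ W : Set (Z × Z), IsUnifEnt Z W ∧ W ⊆ d := by
  obtain ⟨d₁, ⟨hd₁, hd₁c⟩, hd₁d⟩ := uniformity_hasBasis_closed.mem_iff.1 hd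
  set d₂ := SetRel.symmetrize d₁
  have hd₂c : IsClosed d₂ := hd₁c.inter (hd₁c.preimage continuous_swap)
  obtain ⟨u, hu, hud₂⟩ := mem_uniformity_of_uniformContinuous_invariant
    (f := fun a b : Z => a + b) hZadd (symmetrize_mem_uniformity hd₁)
  have : ContinuousAdd Z := ⟨hZadd.continuous⟩
  have hshift : ∀ t : Z, Continuous fun p : Z × Z => (p.1 + t, p.2 + t) := fun t => by
    fun_prop
  refine ⟨{p | ∀ t : Z, (p.1 + t, p.2 + t) ∈ d₂}, ⟨?_, ?_, ?_, ?_⟩, ?_⟩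
  · exact mem_of_superset hu fun p hp t => hud₂ p.1 p.2 t hp
  · rw [ofPred_forall]
    exact isClosed_iInter fun t => hd₂c.preimage (hshift t)
  · intro p hp t t'
    simpa only [add_assoc] using hp (t + t')
  · exact fun p hp t => ⟨(hp t).2, (hp t).1⟩
  · intro p hp
    simpa only [add_zero] using hd₁d (hp 0).1

lemma mem_closure_of_forall_isUnifEnt (hZadd : UniformContinuous fun p : Z × Z => p.1 + p.2)
    {s : SetRel Z Z} {z₁ z₂ : Z}
    (h : ∀ W : Set (Z × Z), IsUnifEnt Z W → ∃ z, (z₁, z) ∈ s ∧ (z, z₂) ∈ W ○ (W ○ W)) :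
    (z₁, z₂) ∈ closure s := by
  rw [closure_eq_inter_uniformity]
  refine mem_iInter₂.2 fun d hd => ?_
  obtain ⟨t, ht, htd⟩ := comp3_mem_uniformity hd
  obtain ⟨W, hW, hWt⟩ := exists_isUnifEnt_subset hZadd ht
  obtain ⟨z, hz, hzz₂⟩ := h W hW
  exact ⟨z₁, refl_mem_uniformity hd, z, hz,
    htd (comp_subset_comp hWt (comp_subset_comp hWt hWt) hzz₂)⟩

end UniformMonoid

lemma pairwise_disjoint_collars {S : Type u} {ω k : ℕ → Set S}
    (hωk : ∀ n, ω (n + 1) ⊆ k n) (hkω : ∀ n, k n ⊆ ω n) :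
    Pairwise (Disjoint on fun j => ω (2 * j) \ k (2 * j + 1)) := by
  have hanti : Antitone ω := antitone_nat_of_succ_le fun n => (hωk n).trans (hkω n)
  refine (pairwise_disjoint_on _).2 fun i j hij => disjoint_left.2 fun s hsi hsj => hsi.2 ?_
  exact hωk (2 * i + 1) (hanti (by omega : 2 * i + 1 + 1 ≤ 2 * j) hsj.1)

lemma SBounded.exists_mem_SWB {S : Type u} {X : Type v} {Z : Type w} [AddCommMonoid X]
    [AddCommMonoid Z] [UniformSpace Z] {𝒦 𝒢 : Set (Set S)} {ℬ : Set (Set X)}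
    {ℱ : Set (S → X)} {ℓ : (S → X) → Z} (hℓ : SBounded 𝒦 𝒢 ℬ ℱ ℓ) {B : Set X} (hB : B ∈ ℬ)
    {W : Set (Z × Z)} (hW : IsUnifEnt Z W) {G : ℕ → Set S} (hG : ∀ n, G n ∈ 𝒢)
    (hGd : Pairwise (Disjoint on G)) : ∃ n, G n ∈ SWB 𝒦 𝒢 ℱ ℓ W B :=
  let ⟨m, hm⟩ := hℓ B hB W hW G hG fun _ _ h => hGd h
  ⟨m + 1, hG _, hm _ m.lt_succ_self⟩

namespace RieszSystem

variable {S : Type u} {X : Type v} {Z : Type w} [AddCommMonoid X] [UniformSpace X]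
  {𝒦 𝒢 : Set (Set S)} {ℬ : Set (Set X)} {ℱ : Set (S → X)} {𝒯 : Filter ((S → X) × (S → X))}

lemma exists_nested_seq (hRS : RieszSystem 𝒦 𝒢 ℬ ℱ 𝒯) {κ γ : Set S} (hκ : κ ∈ 𝒦)
    (hγ : γ ∈ 𝒢) (hκγ : κ ⊆ γ) :
    ∃ ω k : ℕ → Set S, (∀ n, ω n ∈ 𝒢) ∧ (∀ n, k n ∈ 𝒦) ∧ (∀ n, κ ⊆ ω n) ∧ (∀ n, ω n ⊆ γ) ∧
      (∀ n, ω (n + 1) ⊆ k n) ∧ ∀ n, k n ⊆ ω n := by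
  let P : Set S → Prop := fun ω => ω ∈ 𝒢 ∧ κ ⊆ ω ∧ ω ⊆ γ
  have step : ∀ ω : Subtype P, ∃ ω' : Subtype P, ∃ k ∈ 𝒦, ω'.1 ⊆ k ∧ k ⊆ ω.1 := by
    rintro ⟨ω, hω, hκω, hωγ⟩
    obtain ⟨ω', hω', k, hk, hκω', hω'k, hkω⟩ := hRS.KG_interpose κ hκ ω hω hκω
    exact ⟨⟨ω', hω', hκω', (hω'k.trans hkω).trans hωγ⟩, k, hk, hω'k, hkω⟩
  choose next k hk hnext hkω using step
  let ω : ℕ → Subtype P := fun n => next^[n] ⟨γ, hγ, hκγ, subset_rfl⟩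
  refine ⟨fun n => (ω n).1, fun n => k (ω n), fun n => (ω n).2.1, fun n => hk _,
    fun n => (ω n).2.2.1, fun n => (ω n).2.2.2, fun n => ?_, fun n => hkω _⟩
  simpa only [ω, Function.iterate_succ_apply'] using hnext (ω n)

lemma exists_split_of_subset_union (hRS : RieszSystem 𝒦 𝒢 ℬ ℱ 𝒯) {B : Set X} (hB : B ∈ ℬ)
    {δ₁ δ₂ k : Set S} (hδ₁ : δ₁ ∈ 𝒢) (hδ₂ : δ₂ ∈ 𝒢) (hk : k ∈ 𝒦) (hkδ : k ⊆ δ₁ ∪ δ₂)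
    {g : S → X} (hg : g ∈ FB ℱ B) :
    ∃ g₁ ∈ FB ℱ B, ∃ g₂ ∈ FB ℱ B, g₁ + g₂ ∈ FB ℱ B ∧ SupportedBy 𝒦 g₁ δ₁ ∧
      SupportedBy 𝒦 g₂ δ₂ ∧ EqOn g (g₁ + g₂) k := by
  classical
  obtain ⟨p, hp, hpsum, hgp⟩ := hRS.F_partunity B hB {δ₁, δ₂}
    (by simp only [Finset.coe_insert, Finset.coe_singleton, insert_subset_iff,
      singleton_subset_iff]; exact ⟨hδ₁, hδ₂⟩)
    k hk (by simpa only [Finset.mem_insert, Finset.mem_singleton, iUnion_iUnion_eq_or_left,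
      iUnion_iUnion_eq_left] using hkδ) g hg
  obtain ⟨hp₁, hp₁δ⟩ := hp δ₁ (Finset.mem_insert_self _ _)
  obtain ⟨hp₂, hp₂δ⟩ := hp δ₂ (Finset.mem_insert_of_mem (Finset.mem_singleton_self _))
  by_cases hδ : δ₁ = δ₂
  · subst hδ
    refine ⟨p δ₁, hp₁, 0, zero_mem_FB hRS.F_zero (hRS.B_zero B hB), by rwa [add_zero],
      hp₁δ, supportedBy_zero hRS.K_empty _, fun s hs => ?_⟩
    simpa only [Finset.insert_eq_of_mem, Finset.mem_singleton, Finset.sum_singleton,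
      Pi.add_apply, Pi.zero_apply, add_zero] using hgp s hs
  · refine ⟨p δ₁, hp₁, p δ₂, hp₂, ?_, hp₁δ, hp₂δ, fun s hs => ?_⟩
    · simpa only [Finset.sum_pair hδ] using hpsum _ subset_rfl
    · simpa only [Finset.sum_pair hδ, Pi.add_apply] using hgp s hs

lemma apply_add_mem_comp_of_eqOn [UniformSpace Z] (hRS : RieszSystem 𝒦 𝒢 ℬ ℱ 𝒯)
    {ℓ : (S → X) → Z} {A C : Set X} (hA : A ∈ ℬ) (hAC : A + A + A ⊆ C)
    (hℓ : UContOn 𝒯 (FB ℱ C) ℓ) {W : Set (Z × Z)} (hW : W ∈ 𝓤 Z)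
    (hWsymm : ∀ p ∈ W, (p.2, p.1) ∈ W) {k ω a : Set S} (hk : k ∈ 𝒦) (hω : ω ∈ 𝒢) (ha : a ∈ 𝒢)
    (hkω : k ⊆ ω) (hωa : ω ⊆ a) (hsmall : a \ k ∈ SWB 𝒦 𝒢 ℱ ℓ W C) {f g h : S → X}
    (hf : f ∈ FB ℱ A) (hg : g ∈ FB ℱ A) (hh : h ∈ FB ℱ A) (hga : SupportedBy 𝒦 g a)
    (hha : SupportedBy 𝒦 h a) (hgh : EqOn g h ω) :
    (ℓ (f + h), ℓ (f + g)) ∈ W ○ (W ○ W) := by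
  have hAAC : A + A ⊆ C := (subset_add_left _ (hRS.B_zero A hA)).trans hAC
  have hAC' : A ⊆ C := (subset_add_left _ (hRS.B_zero A hA)).trans hAAC
  have hfC : ∀ {u}, u ∈ FB ℱ A → f + u ∈ FB ℱ C := fun hu => add_mem_FB hRS.F_add hf hu hAAC
  have hfuC : ∀ {u v}, u ∈ FB ℱ A → v ∈ FB ℱ A → f + u + v ∈ FB ℱ C := fun hu hv =>
    add_mem_FB hRS.F_add (add_mem_FB hRS.F_add hf hu subset_rfl) hv hAC
  obtain ⟨T, hT, hTℓ⟩ := hℓ W hW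
  obtain ⟨T', hT', hT'add⟩ := hRS.T_add T hT
  obtain ⟨U, hU, hext⟩ := hRS.F_ext A hA T' hT'
  obtain ⟨q, hq, p, hp, hqa, hpa, hqp⟩ := hext k hk a ha (hkω.trans hωa) h hh g hg hha hga
    ⟨ω, hω, hkω, hωa, fun s hs => hgh hs ▸ refl_mem_uniformity hU⟩
  have hT_qp : (f + h + q, f + g + p) ∈ T := by
    simpa only [add_assoc] using hT'add _ _ _ _ (hRS.T_refl T' hT' f hf.1) hqp
  exact ⟨ℓ (f + h + q), hsmall.2 _ (hfC hh) q (FB_mono hAC' hq) hqa,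
    ℓ (f + g + p), hTℓ _ (hfuC hh hq) _ (hfuC hg hp) hT_qp,
    hWsymm _ (hsmall.2 _ (hfC hg) p (FB_mono hAC' hp) hpa)⟩

lemma exists_split_apply_add_mem_comp [AddCommMonoid Z] [UniformSpace Z]
    (hRS : RieszSystem 𝒦 𝒢 ℬ ℱ 𝒯) {ℓ : (S → X) → Z} (hℓ : RieszIntegral 𝒦 𝒢 ℬ ℱ 𝒯 ℓ)
    {A : Set X} (hA : A ∈ ℬ) {γ₁ γ₂ : Set S} (hγ₁ : γ₁ ∈ 𝒢) (hγ₂ : γ₂ ∈ 𝒢) {f g : S → X}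
    (hf : f ∈ FB ℱ A) (hg : g ∈ FB ℱ A) (hgγ : SupportedBy 𝒦 g (γ₁ ∪ γ₂))
    {W : Set (Z × Z)} (hW : IsUnifEnt Z W) :
    ∃ g₁ ∈ FB ℱ A, ∃ g₂ ∈ FB ℱ A, SupportedBy 𝒦 g₁ γ₁ ∧ SupportedBy 𝒦 g₂ γ₂ ∧
      (ℓ (f + g₁ + g₂), ℓ (f + g)) ∈ W ○ (W ○ W) := by
  obtain ⟨κ, hκ, hκγ, hgκ⟩ := hgγ
  obtain ⟨C, hC, hAC⟩ : ∃ C ∈ ℬ, A + A + A ⊆ C := by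
    obtain ⟨B, hB, hAB⟩ := hRS.B_add A hA A hA
    obtain ⟨C, hC, hBC⟩ := hRS.B_add B hB A hA
    exact ⟨C, hC, (add_subset_add_right hAB).trans hBC⟩
  obtain ⟨ω, k, hω, hk, hκω, hωγ, hωk, hkω⟩ :=
    hRS.exists_nested_seq hκ (hRS.G_union _ hγ₁ _ hγ₂) hκγ
  obtain ⟨n, hn⟩ := SBounded.exists_mem_SWB hℓ.2.1 hC hW
    (fun j => (hRS.KG_diff _ (hk (2 * j + 1)) _ (hω (2 * j))).2)
    (pairwise_disjoint_collars hωk hkω)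
  obtain ⟨g₁, hg₁, g₂, hg₂, hg₁₂, hg₁a, hg₂a, hgeq⟩ := hRS.exists_split_of_subset_union hA
    (hRS.G_inter _ (hω (2 * n)) _ hγ₁) (hRS.G_inter _ (hω (2 * n)) _ hγ₂) (hk (2 * n))
    (fun s hs => (inter_union_distrib_left (ω (2 * n)) γ₁ γ₂).subset
      ⟨hkω _ hs, hωγ _ (hkω _ hs)⟩) hg
  refine ⟨g₁, hg₁, g₂, hg₂, hg₁a.mono inter_subset_right, hg₂a.mono inter_subset_right, ?_⟩
  rw [add_assoc]
  exact hRS.apply_add_mem_comp_of_eqOn hA hAC (hℓ.2.2 C hC).1 hW.1 hW.2.2.2 (hk _) (hω _)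
    (hω _) (hkω _) ((hωk _).trans (hkω _)) hn hf hg hg₁₂ ⟨κ, hκ, hκω _, hgκ⟩
    ((hg₁a.mono inter_subset_left).add hRS.K_union (hg₂a.mono inter_subset_left))
    (hgeq.mono (hωk _))

end RieszSystem

theorem stmt15_general {S : Type u} {X : Type v} {Z : Type w}
    [AddCommMonoid X] [UniformSpace X]
    [AddCommMonoid Z] [UniformSpace Z]
    (hZadd : UniformContinuous fun p : Z × Z => p.1 + p.2)
    {𝒦 𝒢 : Set (Set S)} {ℬ : Set (Set X)} {ℱ : Set (S → X)}
    {𝒯 : Filter ((S → X) × (S → X))}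
    (hRS : RieszSystem 𝒦 𝒢 ℬ ℱ 𝒯)
    (ℓ : (S → X) → Z) (hℓ : RieszIntegral 𝒦 𝒢 ℬ ℱ 𝒯 ℓ)
    (A B : Set X) (hA : A ∈ ℬ) (hAB : A + A ⊆ B)
    (V₁ V₂ : Set (Z × Z))
    (γ₁ γ₂ : Set S) (h1 : γ₁ ∈ SWB 𝒦 𝒢 ℱ ℓ V₁ B) (h2 : γ₂ ∈ SWB 𝒦 𝒢 ℱ ℓ V₂ B) :
    γ₁ ∪ γ₂ ∈ SWB 𝒦 𝒢 ℱ ℓ (closure (SetRel.comp V₁ V₂)) A := by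
  refine ⟨hRS.G_union γ₁ h1.1 γ₂ h2.1, fun f hf g hg hgγ => ?_⟩
  have hAB' : A ⊆ B := (subset_add_left A (hRS.B_zero A hA)).trans hAB
  refine mem_closure_of_forall_isUnifEnt hZadd fun W hW => ?_
  obtain ⟨g₁, hg₁, g₂, hg₂, hg₁γ, hg₂γ, hclose⟩ :=
    hRS.exists_split_apply_add_mem_comp hℓ hA h1.1 h2.1 hf hg hgγ hW
  exact ⟨ℓ (f + g₁ + g₂), ⟨ℓ (f + g₁), h1.2 f (FB_mono hAB' hf) g₁ (FB_mono hAB' hg₁) hg₁γ,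
    h2.2 _ (add_mem_FB hRS.F_add hf hg₁ hAB) g₂ (FB_mono hAB' hg₂) hg₂γ⟩, hclose⟩

theorem stmt15 {S : Type u} {X : Type v} {Z : Type w}
    [AddCommMonoid X] [UniformSpace X] [T2Space X]
    [AddCommMonoid Z] [UniformSpace Z] [T2Space Z]
    (hZadd : UniformContinuous fun p : Z × Z => p.1 + p.2)
    {𝒦 𝒢 : Set (Set S)} {ℬ : Set (Set X)} {ℱ : Set (S → X)}
    {𝒯 : Filter ((S → X) × (S → X))}
    (hRS : RieszSystem 𝒦 𝒢 ℬ ℱ 𝒯)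
    (ℓ : (S → X) → Z) (hℓ : RieszIntegral 𝒦 𝒢 ℬ ℱ 𝒯 ℓ)
    (A B : Set X) (hA : A ∈ ℬ) (hB : B ∈ ℬ) (hAB : A + A ⊆ B)
    (V₁ V₂ : Set (Z × Z)) (hV₁ : IsUnifEnt Z V₁) (hV₂ : IsUnifEnt Z V₂)
    (γ₁ γ₂ : Set S) (h1 : γ₁ ∈ SWB 𝒦 𝒢 ℱ ℓ V₁ B) (h2 : γ₂ ∈ SWB 𝒦 𝒢 ℱ ℓ V₂ B) :
    γ₁ ∪ γ₂ ∈ SWB 𝒦 𝒢 ℱ ℓ (closure (SetRel.comp V₁ V₂)) A :=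
  stmt15_general hZadd hRS ℓ hℓ A B hA hAB V₁ V₂ γ₁ γ₂ h1 h2
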